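/- For every self-admissible word ω of length n, the length of the parameter cylinder satisfies |I_n^P(ω)| ≤ β̄(ω)^{-n+1}, where β̄(ω) is the right endpoint of I_n^P(ω). -/

import Mathlib

open Filter Topology

/-- The β-transformation `T_β x = βx - ⌊βx⌋`. -/
noncomputable def Tb (β : ℝ) (x : ℝ) : ℝ := β * x - ⌊β * x⌋

/-- The (n+1)-st digit `ε_{n+1}(x, β) = ⌊β T_β^{n} x⌋` of the β-expansion of `x`. -/
noncomputable def digit (β : ℝ) (x : ℝ) (n : ℕ) : ℕ := (⌊β * (Tb β)^[n] x⌋).toNat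

/-- Strict lexicographical order on sequences of naturals. -/
def lexLt (a b : ℕ → ℕ) : Prop := ∃ k, (∀ j, j < k → a j = b j) ∧ a k < b k

def lexLe (a b : ℕ → ℕ) : Prop := lexLt a b ∨ a = b

/-- A finite word padded with zeros to an infinite sequence. -/
def pad {n : ℕ} (ω : Fin n → ℕ) : ℕ → ℕ := fun k => if h : k < n then ω ⟨k, h⟩ else 0

/-- The prefix of length `m` of a padded word, again padded with zeros. -/
def trunc {n : ℕ} (ω : Fin n → ℕ) (m : ℕ) : ℕ → ℕ := fun k => if k < m then pad ω k else 0

/-- A word `ω` of length `n` is self-admissible if `σ^i ω ≤_lex (ω_1, …, ω_{n-i})`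
for all `1 ≤ i < n` (comparison after padding with zeros). -/
def selfAdmissible {n : ℕ} (ω : Fin n → ℕ) : Prop :=
  ∀ i, 1 ≤ i → i < n → lexLe (fun k => pad ω (k + i)) (trunc ω (n - i))

/-- Lexicographic order on words of the same length. -/
def wordLt {n : ℕ} (ω ω' : Fin n → ℕ) : Prop := lexLt (pad ω) (pad ω')

def wordLe {n : ℕ} (ω ω' : Fin n → ℕ) : Prop := wordLt ω ω' ∨ ω = ω'

/-- The recurrence time `τ(ω)`: the least `1 ≤ k < n` with
`σ^k(ω_1,…,ω_n) = (ω_1,…,ω_{n-k})`, and `n` if there is no such `k`. -/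
noncomputable def tau {n : ℕ} (ω : Fin n → ℕ) : ℕ :=
  sInf ({k | 1 ≤ k ∧ k < n ∧ ∀ j, j < n - k → pad ω (k + j) = pad ω j} ∪ {n})

/-- The cylinder of the word `ω` in the parameter space `(1, ∞)`. -/
def cylP (n : ℕ) (ω : Fin n → ℕ) : Set ℝ := {β : ℝ | 1 < β ∧ ∀ i : Fin n, digit β 1 i = ω i}

/-- The first `n` digits of the β-expansion of `1`. -/
noncomputable def prefixW (β : ℝ) (n : ℕ) : Fin n → ℕ := fun i => digit β 1 i

/-- The `n`-th recurrence time `τ_n(β)` of `β`. -/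
noncomputable def tauN (β : ℝ) (n : ℕ) : ℕ := tau (prefixW β n)

/-- `t_n(β) = n - ⌊n / τ_n(β)⌋ τ_n(β)`. -/
noncomputable def tN (β : ℝ) (n : ℕ) : ℕ := n - (n / tauN β n) * tauN β n

/-- Left endpoint `β̲_n` of the `n`-th cylinder of `β` in the parameter space. -/
noncomputable def lEnd (β : ℝ) (n : ℕ) : ℝ := sInf (cylP n (prefixW β n))

/-- Right endpoint `β̄_n` of the `n`-th cylinder of `β` in the parameter space. -/
noncomputable def rEnd (β : ℝ) (n : ℕ) : ℝ := sSup (cylP n (prefixW β n))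

/-- The set `Σ_β^n` of β-admissible words of length `n`. -/
def SigmaB (β : ℝ) (n : ℕ) : Set (Fin n → ℕ) :=
  {w | ∃ x : ℝ, 0 ≤ x ∧ x < 1 ∧ ∀ i : Fin n, digit β x i = w i}

open Classical in
/-- The infinite β-expansion `ε*(1, β)` of `1`. -/
noncomputable def epsStar (β : ℝ) : ℕ → ℕ :=
  if h : ∃ m, digit β 1 m ≠ 0 ∧ ∀ k, m < k → digit β 1 k = 0 then
    fun n =>
      if n % (h.choose + 1) = h.choose then digit β 1 h.choose - 1
      else digit β 1 (n % (h.choose + 1))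
  else digit β 1

/-! For `β` in the cylinder of `ω`, expanding `1` gives
`∑ ω_i / β^(i+1) + T_β^n(1) / β^n = 1` with `0 ≤ T_β^n(1) < 1`. As `x ↦ ∑ ω_i / x^i` is antitone,
for `a ≤ b` in the cylinder `(b - a) b^n ≤ (b - ∑ ω_i / b^i) b^n = b T_b^n(1) ≤ b`, i.e.
`b - a ≤ b^(1-n)`. This closed condition passes from the cylinder to its endpoints. -/

open Finset Set

section BetaTransformation

variable {β x : ℝ}

lemma Tb_iterate_nonneg (hx : 0 ≤ x) : ∀ k, 0 ≤ (Tb β)^[k] x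
  | 0 => hx
  | k + 1 => by
    rw [Function.iterate_succ_apply']
    exact Int.fract_nonneg _

lemma Tb_iterate_lt_one {k : ℕ} (hk : k ≠ 0) : (Tb β)^[k] x < 1 := by
  obtain ⟨m, rfl⟩ := Nat.exists_eq_succ_of_ne_zero hk
  rw [Function.iterate_succ_apply']
  exact Int.fract_lt_one _

lemma digit_eq_mul_sub_iterate (hβ : 0 ≤ β) (hx : 0 ≤ x) (k : ℕ) :
    (digit β x k : ℝ) = β * (Tb β)^[k] x - (Tb β)^[k + 1] x := by
  have hfloor : (0 : ℤ) ≤ ⌊β * (Tb β)^[k] x⌋ :=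
    Int.floor_nonneg.2 (mul_nonneg hβ (Tb_iterate_nonneg hx k))
  rw [digit, ← Int.cast_natCast, Int.toNat_of_nonneg hfloor, Function.iterate_succ_apply', Tb]
  ring

lemma sum_digit_div_pow_add_iterate_div_pow (hβ : 0 < β) (hx : 0 ≤ x) (n : ℕ) :
    ∑ k ∈ range n, (digit β x k : ℝ) / β ^ (k + 1) + (Tb β)^[n] x / β ^ n = x := by
  induction n with
  | zero => simp
  | succ n ih =>
    conv_rhs => rw [← ih]
    rw [sum_range_succ, digit_eq_mul_sub_iterate hβ.le hx, add_assoc]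
    congr 1
    field_simp
    ring

end BetaTransformation

lemma antitoneOn_mul_sum_div_pow_succ {n : ℕ} {w : Fin n → ℝ} (hw : ∀ i, 0 ≤ w i) :
    AntitoneOn (fun x : ℝ => x * ∑ i, w i / x ^ ((i : ℕ) + 1)) (Ioi 0) := by
  intro a ha b hb hab
  have hterm : ∀ x : ℝ, 0 < x → ∀ i : Fin n,
      x * (w i / x ^ ((i : ℕ) + 1)) = w i / x ^ (i : ℕ) := by
    intro x hx i
    field_simp
    ring
  simp only [mul_sum, hterm a ha, hterm b hb]
  gcongr with i
  · exact hw i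
  · exact pow_pos ha _
  · exact ha.le

lemma csSup_sub_csInf_mul_pow_le {C : Set ℝ} (hne : C.Nonempty) (hbdd : BddAbove C)
    (hbdd' : BddBelow C) (n : ℕ) (h : ∀ a ∈ C, ∀ b ∈ C, (b - a) * b ^ n ≤ b) :
    (sSup C - sInf C) * sSup C ^ n ≤ sSup C := by
  have hclosed : IsClosed {p : ℝ × ℝ | (p.2 - p.1) * p.2 ^ n ≤ p.2} :=
    isClosed_le (by fun_prop) (by fun_prop)
  have hmem : (sInf C, sSup C) ∈ closure (C ×ˢ C) := by
    rw [closure_prod_eq]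
    exact ⟨csInf_mem_closure hne hbdd', csSup_mem_closure hne hbdd⟩
  exact hclosed.closure_subset_iff.2 (fun p hp => h p.1 hp.1 p.2 hp.2) hmem

section Cylinder

variable {n : ℕ} {ω : Fin n → ℕ}

lemma sum_div_pow_add_iterate_div_pow_of_mem_cylP {β : ℝ} (hβ : β ∈ cylP n ω) :
    ∑ i, (ω i : ℝ) / β ^ ((i : ℕ) + 1) + (Tb β)^[n] 1 / β ^ n = 1 := by
  have hdigits : ∑ i, (ω i : ℝ) / β ^ ((i : ℕ) + 1) =
      ∑ k ∈ range n, (digit β 1 k : ℝ) / β ^ (k + 1) := by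
    rw [← Fin.sum_univ_eq_sum_range (fun k => (digit β 1 k : ℝ) / β ^ (k + 1))]
    simp only [hβ.2]
  rw [hdigits]
  exact sum_digit_div_pow_add_iterate_div_pow (one_pos.trans hβ.1) zero_le_one n

lemma sub_mul_pow_le_of_mem_cylP (hn : n ≠ 0) {a b : ℝ} (ha : a ∈ cylP n ω)
    (hb : b ∈ cylP n ω) : (b - a) * b ^ n ≤ b := by
  have ha0 : 0 < a := one_pos.trans ha.1
  have hb0 : 0 < b := one_pos.trans hb.1
  rcases lt_or_ge b a with hba | hab
  · nlinarith [pow_pos hb0 n]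
  set F : ℝ → ℝ := fun x => x * ∑ i, (ω i : ℝ) / x ^ ((i : ℕ) + 1) with hF
  have hFa : F a ≤ a := by
    have hexp := sum_div_pow_add_iterate_div_pow_of_mem_cylP ha
    have hrem := div_nonneg (Tb_iterate_nonneg zero_le_one n (β := a)) (pow_pos ha0 n).le
    simp only [hF]
    nlinarith
  have hFb : F b ≤ F a :=
    antitoneOn_mul_sum_div_pow_succ (fun i => Nat.cast_nonneg _) ha0 hb0 hab
  have hrem : (b - F b) * b ^ n = b * (Tb b)^[n] 1 := by
    have hexp := sum_div_pow_add_iterate_div_pow_of_mem_cylP hb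
    simp only [hF]
    field_simp at hexp
    linear_combination (-b) * hexp
  calc (b - a) * b ^ n ≤ (b - F b) * b ^ n := by gcongr; linarith
    _ = b * (Tb b)^[n] 1 := hrem
    _ ≤ b := mul_le_of_le_one_right hb0.le (Tb_iterate_lt_one hn).le

lemma bddAbove_cylP (hn : n ≠ 0) : BddAbove (cylP n ω) := by
  rcases (cylP n ω).eq_empty_or_nonempty with hempty | ⟨a, ha⟩
  · simp [hempty]
  refine ⟨a + 1, fun b hb => ?_⟩
  rcases le_total b a with hba | hab
  · linarith
  have hb1 : 1 ≤ b := hb.1.le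
  have hlen := sub_mul_pow_le_of_mem_cylP hn ha hb
  nlinarith [le_self_pow₀ hb1 hn]

end Cylinder

theorem cylinder_length_upper_bound_general (n : ℕ) (hn : 1 ≤ n) (ω : Fin n → ℕ)
    (hne : (cylP n ω).Nonempty) :
    sSup (cylP n ω) - sInf (cylP n ω) ≤ (sSup (cylP n ω)) ^ (1 - (n : ℤ)) := by
  have hn0 : n ≠ 0 := by omega
  have hlen := csSup_sub_csInf_mul_pow_le hne (bddAbove_cylP hn0) ⟨1, fun β hβ => hβ.1.le⟩ n
    (fun a ha b hb => sub_mul_pow_le_of_mem_cylP hn0 ha hb)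
  obtain ⟨β, hβ⟩ := hne
  have hpos : 0 < sSup (cylP n ω) :=
    one_pos.trans (hβ.1.trans_le (le_csSup (bddAbove_cylP hn0) hβ))
  rw [zpow_sub₀ hpos.ne', zpow_one, zpow_natCast, le_div_iff₀ (by positivity)]
  exact hlen

theorem cylinder_length_upper_bound (n : ℕ) (hn : 1 ≤ n) (ω : Fin n → ℕ)
    (hsa : selfAdmissible ω) (hne : (cylP n ω).Nonempty) :
    sSup (cylP n ω) - sInf (cylP n ω) ≤ (sSup (cylP n ω)) ^ (1 - (n : ℤ)) :=
  cylinder_length_upper_bound_general n hn ω hne
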